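/- Let $E$ and $F$ be row-finite directed graphs with no sources, $R$ an integral domain with identity, $\pi : L_R(E) \to L_R(F)$ a ring $*$-isomorphism with $\pi(D(E)) = D(F)$, and $\kappa : E^\infty \to F^\infty$ the induced homeomorphism. Then for every normalizer $n$ of $D(E)$: (a) $x \in \operatorname{dom}(n)$ if and only if $\kappa(x) \in \operatorname{dom}(\pi(n))$, and (b) $\kappa(\alpha_n(x)) = \alpha_{\pi(n)}(\kappa(x))$ for all $x \in \operatorname{dom}(n)$. -/

import Mathlib

open scoped Classical BigOperators

namespace LPA

structure DirGraph where
  V : Type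
  E : Type
  r : E → V
  s : E → V

structure InfPath (G : DirGraph) where
  edges : ℕ → G.E
  compat : ∀ i, G.s (edges i) = G.r (edges (i + 1))

structure FinPath (G : DirGraph) where
  len : ℕ
  vtx : G.V
  edges : ℕ → G.E
  compat : ∀ i, i + 1 < len → G.s (edges i) = G.r (edges (i + 1))
  vtx_eq : 0 < len → vtx = G.r (edges 0)

variable {G : DirGraph}

/-- The source vertex of a finite path (its `vtx` if it has length `0`). -/
def FinPath.src (μ : FinPath G) : G.V :=
  if μ.len = 0 then μ.vtx else G.s (μ.edges (μ.len - 1))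

/-- The range vertex of an infinite path. -/
def InfPath.rng (x : InfPath G) : G.V := G.r (x.edges 0)

/-- `x ∼ₖ y`: shift equivalence with lag `k`. -/
def ShiftEquiv (x : InfPath G) (k : ℤ) (y : InfPath G) : Prop :=
  ∃ a b N : ℕ, (a : ℤ) - (b : ℤ) = k ∧ ∀ i, N ≤ i → x.edges (i + a) = y.edges (i + b)

def RowFinite (G : DirGraph) : Prop := ∀ v : G.V, {e : G.E | G.r e = v}.Finite

def NoSources (G : DirGraph) : Prop := ∀ v : G.V, ∃ e : G.E, G.r e = v

/-- `x = μ z`: the infinite path `x` is the concatenation of the finite path `μ`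
with the infinite path `z`. -/
def IsConcat (μ : FinPath G) (z x : InfPath G) : Prop :=
  z.rng = μ.src ∧ ∀ i, x.edges i = if i < μ.len then μ.edges i else z.edges (i - μ.len)

/-- `ρ = μ β`: concatenation of finite paths. -/
def IsAppendF (μ β ρ : FinPath G) : Prop :=
  ρ.len = μ.len + β.len ∧ (∀ i < μ.len, ρ.edges i = μ.edges i) ∧
    (∀ i < β.len, ρ.edges (μ.len + i) = β.edges i) ∧
    ρ.vtx = if μ.len = 0 then β.vtx else μ.vtx

/-- Triples `(x, k, y)`: the ambient type of the graph groupoid. -/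
abbrev GTrip (G : DirGraph) := InfPath G × ℤ × InfPath G

def gmul (g h : GTrip G) : GTrip G := (g.1, g.2.1 + h.2.1, h.2.2)
def ginv (g : GTrip G) : GTrip G := (g.2.2, -g.2.1, g.1)
def unit (x : InfPath G) : GTrip G := (x, 0, x)

def GraphGroupoid (G : DirGraph) : Set (GTrip G) :=
  {g | ShiftEquiv g.1 g.2.1 g.2.2}

/-- `BC` for subsets of the groupoid. -/
def setMul (B C : Set (GTrip G)) : Set (GTrip G) :=
  {g | ∃ γ ∈ B, ∃ η ∈ C, γ.2.2 = η.1 ∧ g = gmul γ η}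

def setInv (B : Set (GTrip G)) : Set (GTrip G) := ginv '' B

/-- The cylinder set `Z(μ)` of infinite paths extending `μ`. -/
def Zset (μ : FinPath G) : Set (InfPath G) :=
  {x | (∀ i < μ.len, x.edges i = μ.edges i) ∧ x.rng = μ.vtx}

/-- The basic compact open bisection `Z(μ,ν) = {(μz, |μ|-|ν|, νz)}`. -/
def ZZ (μ ν : FinPath G) : Set (GTrip G) :=
  {g | ∃ z : InfPath G, IsConcat μ z g.1 ∧ IsConcat ν z g.2.2 ∧
    g.2.1 = (μ.len : ℤ) - (ν.len : ℤ)}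

instance : TopologicalSpace (InfPath G) :=
  TopologicalSpace.generateFrom {S | ∃ μ : FinPath G, S = Zset μ}

def unitSet (S : Set (InfPath G)) : Set (GTrip G) := {g | ∃ x ∈ S, g = unit x}

variable (R : Type) [CommRing R]

/-- The diagonal `D(E)` of the Steinberg algebra. -/
noncomputable def Diag (G : DirGraph) : Submodule R (GTrip G → R) :=
  Submodule.span R {f | ∃ μ : FinPath G, f = Set.indicator (unitSet (Zset μ)) 1}

/-- The Steinberg algebra `A_R(G_E)` as a set of functions on the groupoid. -/
noncomputable def Steinberg (G : DirGraph) : Submodule R (GTrip G → R) :=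
  Submodule.span R
    {f | ∃ μ ν : FinPath G, μ.src = ν.src ∧ f = Set.indicator (ZZ μ ν) 1}

variable {R}

/-- Convolution product. -/
noncomputable def conv (f g : GTrip G → R) : GTrip G → R :=
  fun γ => ∑ᶠ η ∈ {η : GTrip G | η.1 = γ.1}, f η * g (gmul (ginv η) γ)

/-- Involution `f^*(γ) = star (f (γ⁻¹))`. -/
def starf [StarRing R] (f : GTrip G → R) : GTrip G → R :=
  fun γ => star (f (ginv γ))

/-- `n` is a normalizer of the diagonal. -/
def IsNormalizer [StarRing R] (n : GTrip G → R) : Prop :=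
  n ∈ Steinberg R G ∧ ∀ d ∈ Diag R G,
    conv (conv n d) (starf n) ∈ Diag R G ∧ conv (conv (starf n) d) n ∈ Diag R G

/-- `α_n(x) = r(supp(n) x)` (given by a choice; unique for normalizers). -/
noncomputable def alphaFun (n : GTrip G → R) (x : InfPath G) : InfPath G :=
  if h : ∃ g : GTrip G, n g ≠ 0 ∧ g.2.2 = x then h.choose.1 else x

/-- `dom(n) = supp(n^* n)`, as a subset of the infinite path space. -/
noncomputable def domSet [StarRing R] (n : GTrip G → R) : Set (InfPath G) :=
  {x | conv (starf n) n (unit x) ≠ 0}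

/-- `ran(n) = supp(n n^*)`, as a subset of the infinite path space. -/
noncomputable def ranSet [StarRing R] (n : GTrip G → R) : Set (InfPath G) :=
  {x | conv n (starf n) (unit x) ≠ 0}

/-- `d ∘ α_n`, viewed as a function on the groupoid vanishing off `s(supp n)`. -/
noncomputable def dAlpha (d n : GTrip G → R) : GTrip G → R := fun g =>
  if (g.2.1 = 0 ∧ g.1 = g.2.2 ∧ ∃ h : GTrip G, n h ≠ 0 ∧ h.2.2 = g.2.2)
  then d (unit (alphaFun n g.2.2)) else 0

/-- `p_x`, the characteristic function of the unit `{x}`. -/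
noncomputable def ppt (R : Type) [CommRing R] (x : InfPath G) : GTrip G → R :=
  Set.indicator {unit x} 1

/-- `f` is homogeneous of degree `k`. -/
def Homog (k : ℤ) (f : GTrip G → R) : Prop := ∀ g : GTrip G, f g ≠ 0 → g.2.1 = k

def IsCycle (η : FinPath G) : Prop :=
  0 < η.len ∧ η.src = η.vtx ∧
    ∀ i j, 0 < i → i + 1 < η.len → 0 < j → j + 1 < η.len → i ≠ j →
      G.s (η.edges i) ≠ G.r (η.edges j)

def HasEntrance (η : FinPath G) : Prop :=
  ∃ (e : G.E) (i : ℕ), i < η.len ∧ G.r e = G.r (η.edges i) ∧ e ≠ η.edges i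

/-- `z = η η η ⋯`. -/
def IsPeriodicOf (η : FinPath G) (z : InfPath G) : Prop :=
  ∀ i, z.edges i = η.edges (i % η.len)

end LPA

/-!
For a normalizer `n`, testing `n d n^*` against cylinders `d` that isolate one source shows that
the support of `n` meets each source fibre at most once (this is where `R` being a domain enters,
through a top-coefficient argument). Consequently `(n^* d n)(x) ≠ 0` exactly when `x ∈ dom(n)`
and `d(α_n(x)) ≠ 0`. Since `π(n^* d n) = π(n)^* π(d) π(n)`, `π(D(E)) = D(F)` and `κ` matches the
supports of diagonal elements, membership in `dom` and the values of `α` are determined by such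
diagonal tests on both sides, and cylinders separate points.
-/

namespace LPA

variable {G : DirGraph} {R : Type} [CommRing R]

theorem InfPath.ext {x y : InfPath G} (h : ∀ i, x.edges i = y.edges i) : x = y := by
  cases x; cases y; congr; exact funext h

def InfPath.shift (x : InfPath G) (m : ℕ) : InfPath G :=
  ⟨fun i => x.edges (i + m), fun i => by rw [Nat.add_right_comm]; exact x.compat (i + m)⟩

def InfPath.take (x : InfPath G) (L : ℕ) : FinPath G :=
  ⟨L, x.rng, x.edges, fun i _ => x.compat i, fun _ => rfl⟩

theorem InfPath.shift_eq_shift_iff {x y : InfPath G} {m n : ℕ} :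
    x.shift m = y.shift n ↔ ∀ i, x.edges (i + m) = y.edges (i + n) :=
  ⟨fun h i => congrArg (fun z : InfPath G => z.edges i) h, fun h => InfPath.ext h⟩

@[simp]
theorem InfPath.take_len (x : InfPath G) (L : ℕ) : (x.take L).len = L :=
  rfl

theorem mem_Zset_take_iff {x y : InfPath G} {L : ℕ} :
    y ∈ Zset (x.take L) ↔ (∀ i < L, y.edges i = x.edges i) ∧ y.rng = x.rng :=
  Iff.rfl

theorem InfPath.mem_Zset_take (x : InfPath G) (L : ℕ) : x ∈ Zset (x.take L) :=
  ⟨fun _ _ => rfl, rfl⟩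

theorem mem_Zset_iff_mem_Zset_take {μ : FinPath G} {x y : InfPath G} (hx : x ∈ Zset μ) :
    y ∈ Zset μ ↔ y ∈ Zset (x.take μ.len) := by
  rw [mem_Zset_take_iff]
  constructor
  · rintro ⟨he, hr⟩
    exact ⟨fun i hi => (he i hi).trans (hx.1 i hi).symm, hr.trans hx.2.symm⟩
  · rintro ⟨he, hr⟩
    exact ⟨fun i hi => (he i hi).trans (hx.1 i hi), hr.trans hx.2⟩

theorem rng_shift_len_eq_src {μ : FinPath G} {x : InfPath G} (hx : x ∈ Zset μ) :
    (x.shift μ.len).rng = μ.src := by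
  unfold FinPath.src
  split_ifs with h
  · simpa [InfPath.rng, InfPath.shift, h] using hx.2
  · obtain ⟨k, hk⟩ := Nat.exists_eq_succ_of_ne_zero h
    have hxk := hx.1 k (by omega)
    simp only [InfPath.rng, InfPath.shift, hk, zero_add, Nat.succ_sub_one]
    rw [← x.compat k, hxk]

theorem InfPath.take_src (x : InfPath G) (L : ℕ) : (x.take L).src = (x.shift L).rng :=
  (rng_shift_len_eq_src (InfPath.mem_Zset_take x L)).symm

theorem isConcat_iff {μ : FinPath G} {z x : InfPath G} :
    IsConcat μ z x ↔ x ∈ Zset μ ∧ z = x.shift μ.len := by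
  constructor
  · rintro ⟨hz, hx⟩
    refine ⟨⟨fun i hi => by simp [hx i, hi], ?_⟩,
      InfPath.ext fun i => by simp [InfPath.shift, hx (i + μ.len)]⟩
    by_cases h : μ.len = 0
    · rw [InfPath.rng, hx 0, if_neg (by omega), Nat.zero_sub]
      simpa [FinPath.src, InfPath.rng, h] using hz
    · rw [InfPath.rng, hx 0, if_pos (by omega), μ.vtx_eq (by omega)]
  · rintro ⟨hx, rfl⟩
    refine ⟨rng_shift_len_eq_src hx, fun i => ?_⟩
    split_ifs with hi
    · exact hx.1 i hi
    · simp only [InfPath.shift, Nat.sub_add_cancel (not_lt.1 hi)]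

theorem mem_ZZ_iff {μ ν : FinPath G} {γ : GTrip G} :
    γ ∈ ZZ μ ν ↔ γ.1 ∈ Zset μ ∧ γ.2.2 ∈ Zset ν ∧ γ.1.shift μ.len = γ.2.2.shift ν.len ∧
      γ.2.1 = μ.len - ν.len := by
  simp only [ZZ, Set.mem_ofPred_eq, isConcat_iff]
  constructor
  · rintro ⟨z, ⟨hx, rfl⟩, ⟨hy, hs⟩, hk⟩
    exact ⟨hx, hy, hs, hk⟩
  · rintro ⟨hx, hy, hs, hk⟩
    exact ⟨_, ⟨hx, rfl⟩, ⟨hy, hs⟩, hk⟩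

theorem ginv_mem_ZZ_iff {μ ν : FinPath G} {γ : GTrip G} : ginv γ ∈ ZZ μ ν ↔ γ ∈ ZZ ν μ := by
  simp only [mem_ZZ_iff, ginv]
  constructor <;> rintro ⟨hx, hy, hs, hk⟩ <;> exact ⟨hy, hx, hs.symm, by omega⟩

theorem eq_of_mem_Zset_of_shift_eq {μ : FinPath G} {x y : InfPath G} (hx : x ∈ Zset μ)
    (hy : y ∈ Zset μ) (hs : x.shift μ.len = y.shift μ.len) : x = y := by
  rw [InfPath.shift_eq_shift_iff] at hs
  refine InfPath.ext fun i => ?_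
  rcases lt_or_ge i μ.len with hi | hi
  · rw [hx.1 i hi, hy.1 i hi]
  · simpa [Nat.sub_add_cancel hi] using hs (i - μ.len)

theorem eq_of_mem_ZZ_of_fst_eq {μ ν : FinPath G} {γ γ' : GTrip G} (h : γ ∈ ZZ μ ν)
    (h' : γ' ∈ ZZ μ ν) (e : γ.1 = γ'.1) : γ = γ' := by
  obtain ⟨-, hy, hs, hk⟩ := mem_ZZ_iff.1 h
  obtain ⟨-, hy', hs', hk'⟩ := mem_ZZ_iff.1 h'
  rw [e, hs'] at hs
  exact Prod.ext e (Prod.ext (hk.trans hk'.symm) (eq_of_mem_Zset_of_shift_eq hy hy' hs.symm))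

/-- Cylinders are nested or disjoint, so this is again a basic bisection; its two paths can be read
off any of its points `γ₀`. -/
theorem ZZ_inter_eq {μ ν σ : FinPath G} {γ₀ : GTrip G} (h₀ : γ₀ ∈ ZZ μ ν)
    (hσ : γ₀.2.2 ∈ Zset σ) :
    ZZ μ ν ∩ {γ | γ.2.2 ∈ Zset σ} =
      ZZ (γ₀.1.take (μ.len + (σ.len - ν.len))) (γ₀.2.2.take (ν.len + (σ.len - ν.len))) := by
  obtain ⟨hx₀, hy₀, hs₀, -⟩ := mem_ZZ_iff.1 h₀
  rw [InfPath.shift_eq_shift_iff] at hs₀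
  ext ⟨x, k, y⟩
  simp only [Set.mem_inter_iff, Set.mem_ofPred_eq, mem_ZZ_iff, InfPath.shift_eq_shift_iff,
    mem_Zset_iff_mem_Zset_take hx₀, mem_Zset_iff_mem_Zset_take hy₀,
    mem_Zset_iff_mem_Zset_take hσ, mem_Zset_take_iff, InfPath.take_len]
  constructor
  · rintro ⟨⟨⟨hxe, hxr⟩, ⟨hye, hyr⟩, hs, hk⟩, hσe, -⟩
    have hy : ∀ i < ν.len + (σ.len - ν.len), y.edges i = γ₀.2.2.edges i := fun i hi =>
      if h : i < ν.len then hye i h else hσe i (by omega)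
    refine ⟨⟨fun i hi => ?_, hxr⟩, ⟨hy, hyr⟩, fun i => ?_, by push_cast; omega⟩
    · rcases lt_or_ge i μ.len with h | h
      · exact hxe i h
      · obtain ⟨j, rfl⟩ := Nat.exists_eq_add_of_le' h
        rw [hs, hs₀, hy _ (by omega)]
    · simpa only [← add_assoc, add_right_comm _ (σ.len - ν.len)] using hs (i + (σ.len - ν.len))
  · rintro ⟨⟨hxe, hxr⟩, ⟨hye, hyr⟩, hs, hk⟩
    refine ⟨⟨⟨fun i hi => hxe i (by omega), hxr⟩, ⟨fun i hi => hye i (by omega), hyr⟩,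
      fun i => ?_, by push_cast at hk; omega⟩, fun i hi => hye i (by omega), hyr⟩
    rcases lt_or_ge i (σ.len - ν.len) with h | h
    · rw [hxe _ (by omega), hs₀, hye _ (by omega)]
    · obtain ⟨j, rfl⟩ := Nat.exists_eq_add_of_le' h
      simpa only [← add_assoc, add_right_comm _ (σ.len - ν.len)] using hs j

theorem mem_unitSet_iff {S : Set (InfPath G)} {x : InfPath G} : unit x ∈ unitSet S ↔ x ∈ S :=
  ⟨fun ⟨y, hy, e⟩ => by rwa [show x = y from congrArg Prod.fst e], fun hx => ⟨x, hx, rfl⟩⟩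

theorem unitSet_Zset_eq_ZZ (μ : FinPath G) : unitSet (Zset μ) = ZZ μ μ := by
  ext γ
  constructor
  · rintro ⟨x, hx, rfl⟩
    exact mem_ZZ_iff.2 ⟨hx, hx, rfl, by simp [unit]⟩
  · intro h
    obtain ⟨hx, hy, hs, hk⟩ := mem_ZZ_iff.1 h
    exact ⟨γ.1, hx, Prod.ext rfl (Prod.ext (by simpa [unit] using hk)
      (eq_of_mem_Zset_of_shift_eq hx hy hs).symm)⟩

theorem support_subset_range_unit {d : GTrip G → R} (hd : d ∈ Diag R G) :
    Function.support d ⊆ Set.range unit := by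
  induction hd using Submodule.span_induction with
  | mem d hd =>
    obtain ⟨μ, rfl⟩ := hd
    exact Set.support_indicator_subset.trans fun γ ⟨x, _, e⟩ => ⟨x, e.symm⟩
  | zero => simp
  | add d d' _ _ h h' => exact (Function.support_add d d').trans (Set.union_subset h h')
  | smul c d _ h => exact (Function.support_const_smul_subset c d).trans h

theorem finite_support_inter_fst_fiber {f : GTrip G → R} (hf : f ∈ Steinberg R G)
    (w : InfPath G) : (Function.support f ∩ {γ | γ.1 = w}).Finite := by
  induction hf using Submodule.span_induction generalizing w with
  | mem f hf =>
    obtain ⟨μ, ν, -, rfl⟩ := hf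
    refine Set.Subsingleton.finite fun γ hγ γ' hγ' => ?_
    exact eq_of_mem_ZZ_of_fst_eq (Set.support_indicator_subset hγ.1)
      (Set.support_indicator_subset hγ'.1) (hγ.2.trans hγ'.2.symm)
  | zero => simp
  | add f f' _ _ h h' =>
    refine ((h w).union (h' w)).subset ?_
    rw [← Set.union_inter_distrib_right]
    exact Set.inter_subset_inter_left _ (Function.support_add f f')
  | smul c f _ h =>
    exact (h w).subset (Set.inter_subset_inter_left _ (Function.support_const_smul_subset c f))

theorem Diag_le_Steinberg : Diag R G ≤ Steinberg R G :=
  Submodule.span_le.2 fun _ ⟨μ, hd⟩ =>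
    Submodule.subset_span ⟨μ, μ, rfl, by rw [hd, unitSet_Zset_eq_ZZ]⟩

theorem starf_mem_Steinberg [StarRing R] {f : GTrip G → R} (hf : f ∈ Steinberg R G) :
    starf f ∈ Steinberg R G := by
  induction hf using Submodule.span_induction with
  | mem f hf =>
    obtain ⟨μ, ν, hsrc, rfl⟩ := hf
    refine Submodule.subset_span ⟨ν, μ, hsrc.symm, funext fun γ => ?_⟩
    by_cases h : γ ∈ ZZ ν μ <;> simp [starf, ginv_mem_ZZ_iff, h]
  | zero =>
    rw [show starf (0 : GTrip G → R) = 0 from funext fun _ => star_zero R]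
    exact zero_mem _
  | add f f' _ _ h h' =>
    rw [show starf (f + f') = starf f + starf f' from funext fun _ => star_add _ _]
    exact add_mem h h'
  | smul c f _ h =>
    rw [show starf (c • f) = star c • starf f from funext fun _ => star_mul' _ _]
    exact Submodule.smul_mem _ _ h

theorem conv_apply_of_mem_Diag (f : GTrip G → R) {d : GTrip G → R} (hd : d ∈ Diag R G)
    (γ : GTrip G) : conv f d γ = f γ * d (unit γ.2.2) := by
  rw [conv, finsum_mem_inter_support_eq' _ _ {γ}, finsum_mem_singleton]
  · simp [gmul, ginv, unit]
  · intro η hη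
    obtain ⟨x, hx⟩ := support_subset_range_unit hd (right_ne_zero_of_mul hη)
    simp only [gmul, ginv, unit, Prod.mk.injEq] at hx
    constructor
    · intro h
      exact Prod.ext h (Prod.ext (by omega) (hx.1.symm.trans hx.2.2))
    · rintro rfl
      rfl

def mulDiag : (GTrip G → R) →ₗ[R] (GTrip G → R) →ₗ[R] (GTrip G → R) :=
  LinearMap.mk₂ R (fun f d γ => f γ * d (unit γ.2.2))
    (fun _ _ _ => funext fun _ => add_mul _ _ _) (fun _ _ _ => funext fun _ => mul_assoc _ _ _)
    (fun _ _ _ => funext fun _ => mul_add _ _ _)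
    (fun _ _ _ => funext fun _ => mul_left_comm _ _ _)

theorem mulDiag_indicator (μ ν σ : FinPath G) :
    mulDiag ((ZZ μ ν).indicator 1) ((unitSet (Zset σ)).indicator (1 : GTrip G → R)) =
      (ZZ μ ν ∩ {γ | γ.2.2 ∈ Zset σ}).indicator 1 := by
  ext γ
  simp [mulDiag, Set.indicator_apply, mem_unitSet_iff, ← ite_and, and_comm]

theorem conv_mem_Steinberg_of_mem_Diag {f d : GTrip G → R} (hf : f ∈ Steinberg R G)
    (hd : d ∈ Diag R G) : conv f d ∈ Steinberg R G := by
  have hmem := Submodule.apply_mem_map₂ mulDiag hf hd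
  rw [Steinberg, Diag, Submodule.map₂_span_span] at hmem
  rw [show conv f d = mulDiag f d from funext (conv_apply_of_mem_Diag f hd)]
  refine Submodule.span_le.2 ?_ hmem
  rintro _ ⟨_, ⟨μ, ν, -, rfl⟩, _, ⟨σ, rfl⟩, rfl⟩
  dsimp only [SetLike.mem_coe]
  rw [mulDiag_indicator]
  obtain h | ⟨γ₀, h₀, hσ⟩ := (ZZ μ ν ∩ {γ | γ.2.2 ∈ Zset σ}).eq_empty_or_nonempty
  · rw [h, Set.indicator_empty]
    exact zero_mem _
  · have hsrc := (mem_ZZ_iff.1 h₀).2.2.1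
    rw [InfPath.shift_eq_shift_iff] at hsrc
    rw [ZZ_inter_eq h₀ hσ]
    refine Submodule.subset_span ⟨_, _, ?_, rfl⟩
    simp only [InfPath.take_src, InfPath.rng, InfPath.shift, zero_add]
    rw [add_comm μ.len, add_comm ν.len, hsrc]

theorem map_conv_conv_of_mem_Diag {F : DirGraph} {π : (GTrip G → R) → (GTrip F → R)}
    (hmul : ∀ f ∈ Steinberg R G, ∀ g ∈ Steinberg R G, π (conv f g) = conv (π f) (π g))
    {f g d : GTrip G → R} (hf : f ∈ Steinberg R G) (hg : g ∈ Steinberg R G) (hd : d ∈ Diag R G) :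
    π (conv (conv f d) g) = conv (conv (π f) (π d)) (π g) := by
  rw [hmul _ (conv_mem_Steinberg_of_mem_Diag hf hd) _ hg, hmul _ hf _ (Diag_le_Steinberg hd)]

theorem exists_mem_Diag_separating (x : InfPath G) {B : Set (InfPath G)} (hB : B.Finite) :
    ∃ d ∈ Diag R G, d (unit x) = 1 ∧ ∀ y ∈ B, y ≠ x → d (unit y) = 0 := by
  have hsep : ∀ y ∈ B, y ≠ x → ∃ i, y.edges i ≠ x.edges i := fun y _ hne => by
    by_contra! h
    exact hne (InfPath.ext h)
  choose! ι hι using hsep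
  obtain ⟨L, hL⟩ := (hB.image ι).bddAbove
  refine ⟨(unitSet (Zset (x.take (L + 1)))).indicator 1, Submodule.subset_span ⟨_, rfl⟩,
    Set.indicator_of_mem (mem_unitSet_iff.2 (InfPath.mem_Zset_take x _)) _, fun y hy hne => ?_⟩
  refine Set.indicator_of_notMem (fun h => hι y hy hne ?_) _
  exact (mem_unitSet_iff.1 h).1 _ (Nat.lt_succ_of_le (hL ⟨y, hy, rfl⟩))

theorem exists_mem_Diag_apply_unit_ne_zero [Nontrivial R] (x : InfPath G) :
    ∃ d ∈ Diag R G, d (unit x) ≠ 0 := by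
  obtain ⟨d, hd, h1, -⟩ := exists_mem_Diag_separating (R := R) x Set.finite_empty
  exact ⟨d, hd, h1 ▸ one_ne_zero⟩

theorem eq_of_forall_mem_Diag [Nontrivial R] {x y : InfPath G}
    (h : ∀ d ∈ Diag R G, d (unit x) ≠ 0 → d (unit y) ≠ 0) : x = y := by
  by_contra hne
  obtain ⟨d, hd, h1, h0⟩ := exists_mem_Diag_separating (R := R) x (Set.finite_singleton y)
  exact h d hd (h1 ▸ one_ne_zero) (h0 y rfl (Ne.symm hne))

theorem ginv_ginv (γ : GTrip G) : ginv (ginv γ) = γ := by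
  simp [ginv]

theorem mk_mem_range_unit_iff {w w' : InfPath G} {t : ℤ} :
    ((w, t, w') : GTrip G) ∈ Set.range unit ↔ t = 0 ∧ w = w' := by
  constructor
  · rintro ⟨z, e⟩
    simp only [unit, Prod.mk.injEq] at e
    exact ⟨e.2.1.symm, e.1.symm.trans e.2.2⟩
  · rintro ⟨rfl, rfl⟩
    exact ⟨w, rfl⟩

theorem conv_apply_unit (f h : GTrip G → R) (x : InfPath G) :
    conv f h (unit x) = ∑ᶠ η ∈ {η : GTrip G | η.1 = x}, f η * h (ginv η) :=
  finsum_mem_congr rfl fun η hη => by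
    rw [show gmul (ginv η) (unit x) = ginv η by simp [gmul, ginv, unit, show η.1 = x from hη]]

theorem finsum_ginv_ne_zero_iff {n F : GTrip G → R}
    (hinj : Set.InjOn (fun γ : GTrip G => γ.2.2) (Function.support n))
    (hF : Function.support F ⊆ Function.support n) (x : InfPath G) :
    ∑ᶠ η ∈ {η : GTrip G | η.1 = x}, F (ginv η) ≠ 0 ↔ ∃ γ, F γ ≠ 0 ∧ γ.2.2 = x := by
  constructor
  · intro h
    obtain ⟨η, hη, hne⟩ := exists_ne_zero_of_finsum_mem_ne_zero h
    exact ⟨ginv η, hne, hη⟩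
  · rintro ⟨γ, hγ, rfl⟩
    rwa [finsum_mem_inter_support_eq' _ _ {ginv γ}, finsum_mem_singleton, ginv_ginv]
    intro η hη
    refine ⟨fun h => ?_, by rintro rfl; rfl⟩
    rw [← hinj (hF hη) (hF hγ) h, ginv_ginv]
    rfl

theorem alphaFun_snd {n : GTrip G → R}
    (hinj : Set.InjOn (fun γ : GTrip G => γ.2.2) (Function.support n)) {γ : GTrip G}
    (hγ : n γ ≠ 0) : alphaFun n γ.2.2 = γ.1 := by
  have h : ∃ γ', n γ' ≠ 0 ∧ γ'.2.2 = γ.2.2 := ⟨γ, hγ, rfl⟩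
  rw [alphaFun, dif_pos h, hinj h.choose_spec.1 hγ h.choose_spec.2]

theorem conv_conv_starf_apply_of_separating [StarRing R] {n d : GTrip G → R}
    (hd : d ∈ Diag R G) {w x : InfPath G} (hdx : d (unit x) = 1)
    (hd0 : ∀ η, n η ≠ 0 → η.1 = w → η.2.2 ≠ x → d (unit η.2.2) = 0) (t : ℤ) (w' : InfPath G) :
    conv (conv n d) (starf n) (w, t, w') = ∑ᶠ i, n (w, i, x) * star (n (w', i - t, x)) := by
  rw [conv, finsum_mem_inter_support_eq' _ _ (Set.range fun i => (w, i, x)), finsum_mem_range]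
  · refine finsum_congr fun i => ?_
    simp [conv_apply_of_mem_Diag _ hd, starf, gmul, ginv, hdx, neg_add_eq_sub]
  · intro i i' e
    simpa using e
  · intro η hη
    rw [Function.mem_support, conv_apply_of_mem_Diag _ hd] at hη
    have hn := left_ne_zero_of_mul (left_ne_zero_of_mul hη)
    refine ⟨fun hw => ⟨η.2.1, Prod.ext hw.symm (Prod.ext rfl ?_)⟩, by rintro ⟨i, rfl⟩; rfl⟩
    by_contra hx
    exact right_ne_zero_of_mul (left_ne_zero_of_mul hη) (hd0 η hn hw (Ne.symm hx))

section Domain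

variable [IsDomain R] [StarRing R]

theorem mem_domSet_iff {n : GTrip G → R}
    (hinj : Set.InjOn (fun γ : GTrip G => γ.2.2) (Function.support n)) {x : InfPath G} :
    x ∈ domSet n ↔ ∃ γ, n γ ≠ 0 ∧ γ.2.2 = x := by
  have h := finsum_ginv_ne_zero_iff (F := fun γ => star (n γ) * n γ) hinj
    (fun _ hγ => right_ne_zero_of_mul hγ) x
  simpa [domSet, conv_apply_unit, starf] using h

/-- `n^* d n` is `d ∘ α_n` on `dom(n)`, up to the nonzero factor `star n * n`. -/
theorem conv_starf_conv_apply_unit_ne_zero_iff {n d : GTrip G → R}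
    (hinj : Set.InjOn (fun γ : GTrip G => γ.2.2) (Function.support n)) (hd : d ∈ Diag R G)
    (x : InfPath G) :
    conv (conv (starf n) d) n (unit x) ≠ 0 ↔ x ∈ domSet n ∧ d (unit (alphaFun n x)) ≠ 0 := by
  simp only [conv_apply_unit, conv_apply_of_mem_Diag _ hd]
  refine (finsum_ginv_ne_zero_iff (F := fun γ => star (n γ) * d (unit γ.1) * n γ) hinj
    (fun _ hγ => right_ne_zero_of_mul hγ) x).trans ?_
  rw [mem_domSet_iff hinj]
  constructor
  · rintro ⟨γ, hγ, rfl⟩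
    have hn : n γ ≠ 0 := right_ne_zero_of_mul hγ
    rw [alphaFun_snd hinj hn]
    exact ⟨⟨γ, hn, rfl⟩, right_ne_zero_of_mul (left_ne_zero_of_mul hγ)⟩
  · rintro ⟨⟨γ, hn, rfl⟩, hdγ⟩
    rw [alphaFun_snd hinj hn] at hdγ
    exact ⟨γ, mul_ne_zero (mul_ne_zero (star_ne_zero.2 hn) hdγ) hn, rfl⟩

/-- The sum is the `t`-th coefficient of `a(X) · b*(X⁻¹)`; at the top degree
`t = max (supp a) - min (supp b)` a single nonzero product survives. -/
theorem exists_finsum_mul_star_ne_zero {a b : ℤ → R} (ha : (Function.support a).Finite)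
    (hb : (Function.support b).Finite) {m j : ℤ} (hm : a m ≠ 0) (hj : b j ≠ 0) :
    ∃ t, m - j ≤ t ∧ ∑ᶠ i, a i * star (b (i - t)) ≠ 0 := by
  obtain ⟨m₁, hm₁, hmax⟩ := Set.exists_max_image _ id ha ⟨m, hm⟩
  obtain ⟨j₁, hj₁, hmin⟩ := Set.exists_min_image _ id hb ⟨j, hj⟩
  have h₁ : m ≤ m₁ := hmax m hm
  have h₂ : j₁ ≤ j := hmin j hj
  refine ⟨m₁ - j₁, by omega, ?_⟩
  rw [finsum_eq_single _ m₁ fun i hi => ?_, sub_sub_cancel]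
  · exact mul_ne_zero hm₁ (star_ne_zero.2 hj₁)
  · by_contra h
    have hi₁ : i ≤ m₁ := hmax i (left_ne_zero_of_mul h)
    have hi₂ : j₁ ≤ i - (m₁ - j₁) := hmin _ (star_ne_zero.1 (right_ne_zero_of_mul h))
    omega

/-- Test `n d n^*` at `(w, t, w')` against a cylinder `d` isolating the common source `x`: what
remains is the correlation of `n(w, ·, x)` with `n(w', ·, x)`, whose top coefficient survives. -/
theorem injOn_snd_support {n : GTrip G → R} (hn : n ∈ Steinberg R G)
    (hnd : ∀ d ∈ Diag R G, conv (conv n d) (starf n) ∈ Diag R G) :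
    Set.InjOn (fun γ : GTrip G => γ.2.2) (Function.support n) := by
  rintro ⟨w, m, x⟩ hγ ⟨w', j, x'⟩ hγ' (rfl : x = x')
  obtain ⟨d, hd, hdx, hd0⟩ := exists_mem_Diag_separating (R := R) x
    ((finite_support_inter_fst_fiber hn w).image fun η => η.2.2)
  have hcorr : ∀ t, ¬(t = 0 ∧ w = w') → ∑ᶠ i, n (w, i, x) * star (n (w', i - t, x)) = 0 := by
    intro t ht
    rw [← conv_conv_starf_apply_of_separating hd hdx
      (fun η hη hw hx => hd0 _ ⟨η, ⟨hη, hw⟩, rfl⟩ hx)]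
    by_contra h
    exact ht (mk_mem_range_unit_iff.1 (support_subset_range_unit (hnd d hd) h))
  have hfin : ∀ v, (Function.support fun i => n (v, i, x)).Finite := fun v =>
    ((finite_support_inter_fst_fiber hn v).image fun η => η.2.1).subset
      fun i hi => ⟨(v, i, x), ⟨hi, rfl⟩, rfl⟩
  obtain rfl | hw := eq_or_ne w w'
  · have hle : ∀ {i i'}, n (w, i, x) ≠ 0 → n (w, i', x) ≠ 0 → i ≤ i' := fun hi hi' => by
      obtain ⟨t, ht, hne⟩ := exists_finsum_mul_star_ne_zero (hfin w) (hfin w) hi hi'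
      obtain rfl : t = 0 := by_contra fun h0 => hne (hcorr t fun h => h0 h.1)
      omega
    rw [le_antisymm (hle hγ hγ') (hle hγ' hγ)]
  · obtain ⟨t, -, hne⟩ := exists_finsum_mul_star_ne_zero (hfin w) (hfin w') hγ hγ'
    exact absurd (hcorr t fun h => hw h.2) hne

end Domain

end LPA

open LPA in
theorem kappa_intertwines_alpha_general {E F : DirGraph}
    {R : Type} [CommRing R] [IsDomain R] [StarRing R]
    (π : (GTrip E → R) → (GTrip F → R))
    (hbij : Set.BijOn π (Steinberg R E : Set (GTrip E → R)) (Steinberg R F : Set (GTrip F → R)))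
    (hmul : ∀ f ∈ Steinberg R E, ∀ g ∈ Steinberg R E, π (conv f g) = conv (π f) (π g))
    (hstar : ∀ f ∈ Steinberg R E, π (starf f) = starf (π f))
    (hdiag : π '' (Diag R E : Set (GTrip E → R)) = (Diag R F : Set (GTrip F → R)))
    (κ : InfPath E ≃ₜ InfPath F)
    (hκ : ∀ d ∈ Diag R E, ∀ x : InfPath E, d (unit x) ≠ 0 ↔ π d (unit (κ x)) ≠ 0) :
    ∀ n : GTrip E → R, IsNormalizer n →
      (∀ x : InfPath E, x ∈ domSet n ↔ κ x ∈ domSet (π n)) ∧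
      (∀ x ∈ domSet n, κ (alphaFun n x) = alphaFun (π n) (κ x)) := by
  intro n ⟨hn, hnorm⟩
  have hn' : starf n ∈ Steinberg R E := starf_mem_Steinberg hn
  have hπD : ∀ {d'}, d' ∈ Diag R F ↔ ∃ d ∈ Diag R E, π d = d' := by
    intro d'; rw [← SetLike.mem_coe, ← hdiag]; rfl
  have hinjE := injOn_snd_support hn fun d hd => (hnorm d hd).1
  have hinjF := injOn_snd_support (hbij.mapsTo hn) fun d' hd' => by
    obtain ⟨d, hd, rfl⟩ := hπD.1 hd'
    exact hπD.2 ⟨_, (hnorm d hd).1, by rw [map_conv_conv_of_mem_Diag hmul hn hn' hd, hstar n hn]⟩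
  have key : ∀ d ∈ Diag R E, ∀ x, x ∈ domSet n ∧ d (unit (alphaFun n x)) ≠ 0 ↔
      κ x ∈ domSet (π n) ∧ π d (unit (alphaFun (π n) (κ x))) ≠ 0 := fun d hd x => by
    rw [← conv_starf_conv_apply_unit_ne_zero_iff hinjE hd,
      ← conv_starf_conv_apply_unit_ne_zero_iff hinjF (hπD.2 ⟨d, hd, rfl⟩), ← hstar n hn,
      ← map_conv_conv_of_mem_Diag hmul hn' hn hd]
    exact hκ _ (hnorm d hd).2 x
  refine ⟨fun x => ⟨fun hx => ?_, fun hx => ?_⟩, fun x hx => ?_⟩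
  · obtain ⟨d, hd, hne⟩ := exists_mem_Diag_apply_unit_ne_zero (R := R) (alphaFun n x)
    exact ((key d hd x).1 ⟨hx, hne⟩).1
  · obtain ⟨d', hd', hne⟩ := exists_mem_Diag_apply_unit_ne_zero (R := R) (alphaFun (π n) (κ x))
    obtain ⟨d, hd, rfl⟩ := hπD.1 hd'
    exact ((key d hd x).2 ⟨hx, hne⟩).1
  · refine eq_of_forall_mem_Diag (R := R) fun d' hd' hne => ?_
    obtain ⟨d, hd, rfl⟩ := hπD.1 hd'
    exact ((key d hd x).1 ⟨hx, (hκ d hd _).2 hne⟩).2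

open LPA in
/-- For a diagonal-preserving ring `*`-isomorphism `π : L_R(E) → L_R(F)` with induced
homeomorphism `κ`, every normalizer `n` of `D(E)` satisfies:
(a) `x ∈ dom(n) ↔ κ(x) ∈ dom(π(n))`, and (b) `κ(α_n(x)) = α_{π(n)}(κ(x))` on `dom(n)`. -/
theorem kappa_intertwines_alpha {E F : DirGraph}
    (hrfE : RowFinite E) (hnsE : NoSources E) (hrfF : RowFinite F) (hnsF : NoSources F)
    {R : Type} [CommRing R] [IsDomain R] [StarRing R]
    (π : (GTrip E → R) → (GTrip F → R))
    (hbij : Set.BijOn π (Steinberg R E : Set (GTrip E → R)) (Steinberg R F : Set (GTrip F → R)))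
    (hadd : ∀ f ∈ Steinberg R E, ∀ g ∈ Steinberg R E, π (f + g) = π f + π g)
    (hmul : ∀ f ∈ Steinberg R E, ∀ g ∈ Steinberg R E, π (conv f g) = conv (π f) (π g))
    (hstar : ∀ f ∈ Steinberg R E, π (starf f) = starf (π f))
    (hdiag : π '' (Diag R E : Set (GTrip E → R)) = (Diag R F : Set (GTrip F → R)))
    (κ : InfPath E ≃ₜ InfPath F)
    (hκ : ∀ d ∈ Diag R E, ∀ x : InfPath E, d (unit x) ≠ 0 ↔ π d (unit (κ x)) ≠ 0) :
    ∀ n : GTrip E → R, IsNormalizer n →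
      (∀ x : InfPath E, x ∈ domSet n ↔ κ x ∈ domSet (π n)) ∧
      (∀ x ∈ domSet n, κ (alphaFun n x) = alphaFun (π n) (κ x)) :=
  kappa_intertwines_alpha_general π hbij hmul hstar hdiag κ hκ
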